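/- Fix n, m ≥ 1 and let A = ℚ[ℏ][x_{i,j}, y_{i,j} : 1 ≤ i ≤ n, 1 ≤ j ≤ m] with the star product f ⋆ g = Σ_I (ℏ^{|I|}/I!) (∂_y^I f)(∂_x^I g) summed over multi-indices I : Fin n × Fin m → ℕ. Let the hyperoctahedral group W = {±1}^n ⋊ S_n act on A by (t,σ)•x_{i,j} = t_i x_{σ(i),j} and (t,σ)•y_{i,j} = t_i y_{σ(i),j}, and let s_W(f) = (1/(2^n n!)) Σ_{w∈W} w•f. Let a, b, c, d : Fin n × Fin m → ℕ be exponent matrices such that for each i the block total degrees Σ_j (a(i,j)+b(i,j)) and Σ_j (c(i,j)+d(i,j)) are even. Then s_W(x^a y^b) ⋆ s_W(x^c y^d) = (1/n!) Σ_{σ∈S_n} Σ_{I} ( ∏_{i,j} C(b(i,j), I(i,j)) · (σ(c)(i,j))_{I(i,j)} ) · ℏ^{|I|} · s_W( x^{a+σ(c)−I} y^{b+σ(d)−I} ), the inner sum over multi-indices I with I ≤ b and I ≤ σ(c) componentwise. -/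

import Mathlib

open Finset MvPolynomial

/-- Variable index set: `((i,j), false)` is `x_{i,j}` and `((i,j), true)` is `y_{i,j}`. -/
abbrev Var14 (n m : ℕ) := (Fin n × Fin m) × Bool

/-- The algebra `A = ℚ[ℏ][x_{i,j}, y_{i,j}]`, with `ℏ = Polynomial.X` in the base ring. -/
abbrev Alg14 (n m : ℕ) := MvPolynomial (Var14 n m) (Polynomial ℚ)

/-- The iterated partial derivative `∂^I` with respect to the `x`-variables
(if `isY = false`) or the `y`-variables (if `isY = true`). -/
noncomputable def derMulti14 (n m : ℕ) (isY : Bool) (I : Fin n × Fin m → ℕ) :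
    Module.End (Polynomial ℚ) (Alg14 n m) :=
  ((Finset.univ : Finset (Fin n × Fin m)).toList).foldr
    (fun p F => ((pderiv ((p, isY) : Var14 n m)).toLinearMap ^ I p) * F) 1

/-- The star product `f ⋆ g = Σ_I (ℏ^{|I|}/I!) (∂_y^I f)(∂_x^I g)`; the (finitely
supported) sum over all multi-indices `I` is realized as a sum over
`I : Fin n × Fin m → Fin (totalDegree f + 1)`, all other terms being zero. -/
noncomputable def star14 (n m : ℕ) (f g : Alg14 n m) : Alg14 n m :=
  ∑ I : Fin n × Fin m → Fin (f.totalDegree + 1),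
    (Polynomial.C (((∏ p : Fin n × Fin m, Nat.factorial (I p) : ℕ) : ℚ))⁻¹ *
        Polynomial.X ^ (∑ p : Fin n × Fin m, (I p : ℕ))) •
      (derMulti14 n m true (fun p => I p) f * derMulti14 n m false (fun p => I p) g)

/-- The action of `(t,σ)` in the hyperoctahedral group `W = {±1}^n ⋊ S_n`:
`(t,σ) • x_{i,j} = t_i x_{σ(i),j}` and `(t,σ) • y_{i,j} = t_i y_{σ(i),j}`.
A sign vector `t ∈ {±1}^n` is encoded as `t : Fin n → Bool` with `true ↦ -1`, `false ↦ 1`. -/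
noncomputable def actW14 (n m : ℕ) (t : Fin n → Bool) (σ : Equiv.Perm (Fin n)) :
    Alg14 n m → Alg14 n m :=
  aeval (fun v : Var14 n m =>
    C (Polynomial.C (if t v.1.1 then (-1 : ℚ) else 1)) * X (((σ v.1.1, v.1.2), v.2) : Var14 n m))

/-- The averaging `s_W(f) = (1/(2^n n!)) Σ_{w ∈ W} w • f` over `W = {±1}^n ⋊ S_n`. -/
noncomputable def symW14 (n m : ℕ) (f : Alg14 n m) : Alg14 n m :=
  Polynomial.C ((2 ^ n * n.factorial : ℚ))⁻¹ •
    ∑ t : Fin n → Bool, ∑ σ : Equiv.Perm (Fin n), actW14 n m t σ f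

/-- The monomial `x^a y^b = ∏_{i,j} x_{i,j}^{a(i,j)} y_{i,j}^{b(i,j)}`. -/
noncomputable def xy14 (n m : ℕ) (a b : Fin n × Fin m → ℕ) : Alg14 n m :=
  ∏ p : Fin n × Fin m, (X ((p, false) : Var14 n m) ^ a p * X ((p, true) : Var14 n m) ^ b p)

/-!
A sign vector `t` multiplies `x^a y^b` by `∏_i t_i^{Σ_j (a(i,j) + b(i,j))}`, which is `1` when every
block has even degree; so on such monomials `s_W` is the `S_n`-average
`(1/n!) Σ_ρ x^{ρ(a)} y^{ρ(b)}`. The star product is bilinear, and since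
`∂_y^I (x^a y^b) = (b)_I x^a y^{b-I}` and `(b)_I / I! = C(b,I)`, on monomials it is the
type `A` rule `x^a y^b ⋆ x^c y^d = Σ_{I ≤ b} C(b,I) (c)_I ℏ^{|I|} x^{a+c-I} y^{b+d-I}`.
Both sides of the theorem thus become sums over `(ρ, τ) ∈ S_n × S_n` and `I`, which match under
`τ = ρσ`, `I ↦ ρ(I)`, the coefficients being invariant under permuting all exponents. The terms
with `I ≰ σ(c)` vanish because `(σ(c))_I = 0`; for the others `a + σ(c) - I, b + σ(d) - I` again
have even blocks, which is what allows expanding `s_W` of them as an `S_n`-average.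
-/

namespace MvPolynomial

variable {σ R : Type*} [CommSemiring R]

theorem pderiv_pow_monomial (v : σ) (k : ℕ) (s : σ →₀ ℕ) (c : R) :
    ((pderiv v).toLinearMap ^ k) (monomial s c) =
      monomial (s - Finsupp.single v k) (c * (s v).descFactorial k) := by
  induction k with
  | zero => simp
  | succ k ih =>
    rw [pow_succ', Module.End.mul_apply, ih, Derivation.coeFn_coe, pderiv_monomial,
      tsub_tsub, ← Finsupp.single_add, Finsupp.tsub_apply, Finsupp.single_eq_same,
      Nat.descFactorial_succ, mul_assoc, Nat.cast_mul, mul_comm ((s v - k : ℕ) : R)]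

theorem foldr_pderiv_pow_monomial {α : Type*} [DecidableEq α] {e : α → σ} (he : e.Injective)
    (k : α → ℕ) {l : List α} (hl : l.Nodup) (s : σ →₀ ℕ) (c : R) :
    (l.foldr (fun p F => (pderiv (e p)).toLinearMap ^ k p * F) 1 :
        Module.End R (MvPolynomial σ R)) (monomial s c) =
      monomial (s - ∑ p ∈ l.toFinset, Finsupp.single (e p) (k p))
        (c * ∏ p ∈ l.toFinset, ((s (e p)).descFactorial (k p) : R)) := by
  induction l with
  | nil => simp
  | cons p l ih =>
    obtain ⟨hp, hl⟩ := List.nodup_cons.mp hl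
    have hp' : p ∉ l.toFinset := by simpa using hp
    have hfresh : (∑ q ∈ l.toFinset, Finsupp.single (e q) (k q)) (e p) = 0 := by
      rw [Finsupp.finsetSum_apply]
      exact Finset.sum_eq_zero fun q hq =>
        Finsupp.single_eq_of_ne (he.ne (ne_of_mem_of_not_mem hq hp')).symm
    rw [List.foldr_cons, Module.End.mul_apply, ih hl, pderiv_pow_monomial, Finsupp.tsub_apply,
      hfresh, tsub_zero, tsub_tsub, List.toFinset_cons, Finset.sum_insert hp',
      Finset.prod_insert hp', add_comm, mul_right_comm, mul_assoc]

end MvPolynomial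

theorem Finset.sum_pi_fin_succ_eq_sum_Iic {ι M : Type*} [Fintype ι] [DecidableEq ι]
    [AddCommMonoid M] (b : ι → ℕ) (F : (ι → ℕ) → M) :
    ∑ I : (i : ι) → Fin (b i + 1), F (fun i => I i) = ∑ J ∈ Finset.Iic b, F J := by
  refine Finset.sum_nbij' (fun I i => I i)
    (fun J i => ⟨min (J i) (b i), Nat.lt_succ_of_le (min_le_right _ _)⟩) ?_ ?_ ?_ ?_ ?_
  · exact fun I _ => Finset.mem_Iic.mpr fun i => Nat.le_of_lt_succ (I i).isLt
  · exact fun _ _ => Finset.mem_univ _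
  · exact fun I _ => funext fun i => Fin.ext (min_eq_left (Nat.le_of_lt_succ (I i).isLt))
  · exact fun J hJ => funext fun i => min_eq_left (Finset.mem_Iic.mp hJ i)
  · exact fun _ _ => rfl

theorem Finset.sum_filter_pi_fin_succ_eq_sum_filter_Iic {ι M : Type*} [Fintype ι]
    [DecidableEq ι] [AddCommMonoid M] (b : ι → ℕ) (P : (ι → ℕ) → Prop) [DecidablePred P]
    (F : (ι → ℕ) → M) :
    ∑ I ∈ Finset.univ.filter (fun I : (i : ι) → Fin (b i + 1) => P fun i => I i),
        F (fun i => I i) =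
      ∑ J ∈ (Finset.Iic b).filter P, F J := by
  rw [Finset.sum_filter, Finset.sum_filter,
    Finset.sum_pi_fin_succ_eq_sum_Iic b fun J => if P J then F J else 0]

namespace QSym14

variable {n m : ℕ}

noncomputable def expo (a b : Fin n × Fin m → ℕ) : Var14 n m →₀ ℕ :=
  Finsupp.equivFunOnFinite.symm fun v => cond v.2 (b v.1) (a v.1)

@[simp] theorem expo_apply_x (a b : Fin n × Fin m → ℕ) (p : Fin n × Fin m) :
    expo a b (p, false) = a p := rfl

@[simp] theorem expo_apply_y (a b : Fin n × Fin m → ℕ) (p : Fin n × Fin m) :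
    expo a b (p, true) = b p := rfl

theorem expo_add (a b a' b' : Fin n × Fin m → ℕ) :
    expo a b + expo a' b' = expo (a + a') (b + b') := by
  ext ⟨p, _ | _⟩ <;> rfl

theorem expo_sub (a b a' b' : Fin n × Fin m → ℕ) :
    expo a b - expo a' b' = expo (a - a') (b - b') := by
  ext ⟨p, _ | _⟩ <;> rfl

theorem sum_single_eq_expo (isY : Bool) (I : Fin n × Fin m → ℕ) :
    ∑ p, Finsupp.single ((p, isY) : Var14 n m) (I p) = cond isY (expo 0 I) (expo I 0) := by
  ext ⟨q, s⟩
  rw [Finsupp.finsetSum_apply, Finset.sum_eq_single q]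
  · cases s <;> cases isY <;> simp
  · intro p _ hpq
    exact Finsupp.single_eq_of_ne (by simp [Ne.symm hpq])
  · simp

theorem xy14_eq_monomial (a b : Fin n × Fin m → ℕ) :
    xy14 n m a b = monomial (expo a b) 1 := by
  have hsplit : expo a b = ∑ p, (Finsupp.single ((p, false) : Var14 n m) (a p) +
      Finsupp.single ((p, true) : Var14 n m) (b p)) := by
    rw [Finset.sum_add_distrib, sum_single_eq_expo, sum_single_eq_expo, cond_false, cond_true,
      expo_add, add_zero, zero_add]
  simp only [xy14, hsplit, monomial_sum_one, X_pow_eq_monomial, monomial_add_single]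

theorem derMulti14_monomial (isY : Bool) (I : Fin n × Fin m → ℕ) (s : Var14 n m →₀ ℕ)
    (c : Polynomial ℚ) :
    derMulti14 n m isY I (monomial s c) =
      monomial (s - ∑ p, Finsupp.single (p, isY) (I p))
        (c * ∏ p, ((s (p, isY)).descFactorial (I p) : Polynomial ℚ)) := by
  have he : Function.Injective fun p : Fin n × Fin m => ((p, isY) : Var14 n m) :=
    fun p q h => congrArg Prod.fst h
  rw [derMulti14, foldr_pderiv_pow_monomial he _ (Finset.nodup_toList _), Finset.toList_toFinset]

theorem derMulti14_y_xy14 (I a b : Fin n × Fin m → ℕ) :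
    derMulti14 n m true I (xy14 n m a b) =
      monomial (expo a (b - I)) (∏ p, ((b p).descFactorial (I p) : Polynomial ℚ)) := by
  rw [xy14_eq_monomial, derMulti14_monomial, sum_single_eq_expo, cond_true, expo_sub, tsub_zero,
    one_mul]
  rfl

theorem derMulti14_x_xy14 (I c d : Fin n × Fin m → ℕ) :
    derMulti14 n m false I (xy14 n m c d) =
      monomial (expo (c - I) d) (∏ p, ((c p).descFactorial (I p) : Polynomial ℚ)) := by
  rw [xy14_eq_monomial, derMulti14_monomial, sum_single_eq_expo, cond_false, expo_sub, tsub_zero,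
    one_mul]
  rfl

theorem derMulti14_y_eq_zero {f : Alg14 n m} {I : Fin n × Fin m → ℕ} {p : Fin n × Fin m}
    (hp : f.totalDegree < I p) : derMulti14 n m true I f = 0 := by
  rw [f.as_sum, map_sum]
  refine Finset.sum_eq_zero fun s hs => ?_
  have hlt : s (p, true) < I p :=
    ((monomial_le_degreeOf _ hs).trans (degreeOf_le_totalDegree f _)).trans_lt hp
  rw [derMulti14_monomial, Finset.prod_eq_zero (Finset.mem_univ p)
    (by rw [Nat.descFactorial_eq_zero_iff_lt.mpr hlt, Nat.cast_zero]), mul_zero, monomial_zero]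

noncomputable def starTerm (I : Fin n × Fin m → ℕ) (f g : Alg14 n m) : Alg14 n m :=
  (Polynomial.C (((∏ p, (I p).factorial : ℕ) : ℚ))⁻¹ * Polynomial.X ^ (∑ p, I p)) •
    (derMulti14 n m true I f * derMulti14 n m false I g)

theorem support_starTerm_subset {f : Alg14 n m} {N : ℕ} (hN : f.totalDegree ≤ N) (g : Alg14 n m) :
    Function.support (starTerm · f g) ⊆ ↑(Finset.Iic fun _ : Fin n × Fin m => N) := by
  intro I hI
  rw [Finset.coe_Iic, Set.mem_Iic]
  by_contra hle
  obtain ⟨p, hp⟩ : ∃ p, N < I p := by simpa [Pi.le_def] using hle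
  apply hI
  dsimp only
  rw [starTerm, derMulti14_y_eq_zero (hN.trans_lt hp), zero_mul, smul_zero]

theorem star14_eq_finsum (f g : Alg14 n m) : star14 n m f g = ∑ᶠ I, starTerm I f g :=
  (Finset.sum_pi_fin_succ_eq_sum_Iic (fun _ => f.totalDegree) (starTerm · f g)).trans
    (finsum_eq_sum_of_support_subset _ (support_starTerm_subset le_rfl g)).symm

theorem star14_eq_sum_of_support_subset {f g : Alg14 n m} {s : Finset (Fin n × Fin m → ℕ)}
    (hs : Function.support (starTerm · f g) ⊆ ↑s) : star14 n m f g = ∑ I ∈ s, starTerm I f g := by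
  rw [star14_eq_finsum, finsum_eq_sum_of_support_subset _ hs]

theorem starTerm_smul_sum_smul_sum {α β : Type*} (S : Finset α) (T : Finset β)
    (r r' : Polynomial ℚ) (f : α → Alg14 n m) (g : β → Alg14 n m) (I : Fin n × Fin m → ℕ) :
    starTerm I (r • ∑ i ∈ S, f i) (r' • ∑ j ∈ T, g j) =
      (r * r') • ∑ i ∈ S, ∑ j ∈ T, starTerm I (f i) (g j) := by
  simp only [starTerm, map_smul, map_sum, smul_mul_smul_comm, Finset.sum_mul_sum,
    Finset.smul_sum]
  exact Finset.sum_congr rfl fun _ _ => Finset.sum_congr rfl fun _ _ => smul_comm _ _ _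

theorem star14_smul_sum_smul_sum {α β : Type*} (S : Finset α) (T : Finset β)
    (r r' : Polynomial ℚ) (f : α → Alg14 n m) (g : β → Alg14 n m) :
    star14 n m (r • ∑ i ∈ S, f i) (r' • ∑ j ∈ T, g j) =
      (r * r') • ∑ i ∈ S, ∑ j ∈ T, star14 n m (f i) (g j) := by
  set N := S.sup fun i => (f i).totalDegree
  have hf : ∀ i ∈ S, (f i).totalDegree ≤ N := fun _ hi =>
    Finset.le_sup (f := fun i => (f i).totalDegree) hi
  have hsum : (r • ∑ i ∈ S, f i).totalDegree ≤ N :=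
    (totalDegree_smul_le _ _).trans (totalDegree_finsetSum_le hf)
  rw [star14_eq_sum_of_support_subset (support_starTerm_subset hsum _),
    Finset.sum_congr rfl fun i hi => Finset.sum_congr rfl fun j _ =>
      star14_eq_sum_of_support_subset (support_starTerm_subset (hf i hi) (g j))]
  simp only [starTerm_smul_sum_smul_sum, ← Finset.smul_sum]
  rw [Finset.sum_comm]
  exact congrArg _ (Finset.sum_congr rfl fun _ _ => Finset.sum_comm)

noncomputable def prodCoeff (b c I : Fin n × Fin m → ℕ) : Polynomial ℚ :=
  ((∏ p, (b p).choose (I p) * (c p).descFactorial (I p) : ℕ) : Polynomial ℚ) *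
    Polynomial.X ^ (∑ p, I p)

noncomputable def prodTerm (a b c d I : Fin n × Fin m → ℕ) : Alg14 n m :=
  prodCoeff b c I • xy14 n m (a + c - I) (b + d - I)

theorem prodCoeff_eq_zero_of_not_le_left {b c I : Fin n × Fin m → ℕ} (h : ¬I ≤ b) :
    prodCoeff b c I = 0 := by
  obtain ⟨p, hp⟩ : ∃ p, b p < I p := by simpa [Pi.le_def] using h
  rw [prodCoeff, Finset.prod_eq_zero (Finset.mem_univ p) (by rw [Nat.choose_eq_zero_of_lt hp,
    zero_mul]), Nat.cast_zero, zero_mul]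

theorem prodCoeff_eq_zero_of_not_le_right {b c I : Fin n × Fin m → ℕ} (h : ¬I ≤ c) :
    prodCoeff b c I = 0 := by
  obtain ⟨p, hp⟩ : ∃ p, c p < I p := by simpa [Pi.le_def] using h
  rw [prodCoeff, Finset.prod_eq_zero (Finset.mem_univ p) (by
    rw [Nat.descFactorial_eq_zero_iff_lt.mpr hp, mul_zero]), Nat.cast_zero, zero_mul]

theorem starTerm_xy14_xy14 (a b c d I : Fin n × Fin m → ℕ) :
    starTerm I (xy14 n m a b) (xy14 n m c d) = prodTerm a b c d I := by
  have hcoeff : (Polynomial.C (((∏ p, (I p).factorial : ℕ) : ℚ))⁻¹ * Polynomial.X ^ (∑ p, I p)) •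
      ((∏ p, ((b p).descFactorial (I p) : Polynomial ℚ)) *
        ∏ p, ((c p).descFactorial (I p) : Polynomial ℚ)) = prodCoeff b c I := by
    have hnat : (∏ p, (b p).descFactorial (I p)) * ∏ p, (c p).descFactorial (I p) =
        (∏ p, (I p).factorial) * ∏ p, (b p).choose (I p) * (c p).descFactorial (I p) := by
      simp only [← Finset.prod_mul_distrib]
      exact Finset.prod_congr rfl fun p _ => by
        rw [Nat.descFactorial_eq_factorial_mul_choose (b p)]; ring
    have hinv : Polynomial.C (((∏ p, (I p).factorial : ℕ) : ℚ))⁻¹ *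
        (((∏ p, (I p).factorial : ℕ) : Polynomial ℚ)) = 1 := by
      rw [← Polynomial.C_eq_natCast, ← map_mul, inv_mul_cancel₀ (by positivity), map_one]
    rw [← Nat.cast_prod, ← Nat.cast_prod, ← Nat.cast_mul, hnat, Nat.cast_mul, smul_eq_mul,
      prodCoeff]
    linear_combination (Polynomial.X ^ (∑ p, I p) *
      ((∏ p, (b p).choose (I p) * (c p).descFactorial (I p) : ℕ) : Polynomial ℚ)) * hinv
  rw [starTerm, derMulti14_y_xy14, derMulti14_x_xy14, monomial_mul, smul_monomial, hcoeff,
    prodTerm, xy14_eq_monomial, smul_monomial, smul_eq_mul, mul_one]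
  by_cases h : I ≤ b ∧ I ≤ c
  · rw [expo_add, add_tsub_assoc_of_le h.2, tsub_add_eq_add_tsub h.1]
  · rw [not_and_or] at h
    rcases h with h | h
    · rw [prodCoeff_eq_zero_of_not_le_left h, monomial_zero, monomial_zero]
    · rw [prodCoeff_eq_zero_of_not_le_right h, monomial_zero, monomial_zero]

theorem star14_xy14_xy14 (a b c d : Fin n × Fin m → ℕ) :
    star14 n m (xy14 n m a b) (xy14 n m c d) = ∑ I ∈ Finset.Iic b, prodTerm a b c d I := by
  have hsupp : Function.support (starTerm · (xy14 n m a b) (xy14 n m c d)) ⊆ ↑(Finset.Iic b) := by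
    intro I hI
    by_contra hIb
    apply hI
    dsimp only
    rw [starTerm_xy14_xy14, prodTerm, prodCoeff_eq_zero_of_not_le_left (by simpa using hIb),
      zero_smul]
  rw [star14_eq_sum_of_support_subset hsupp]
  exact Finset.sum_congr rfl fun I _ => starTerm_xy14_xy14 a b c d I

def permute (σ : Equiv.Perm (Fin n)) (a : Fin n × Fin m → ℕ) : Fin n × Fin m → ℕ :=
  fun p => a (σ⁻¹ p.1, p.2)

theorem permute_permute (ρ σ : Equiv.Perm (Fin n)) (a : Fin n × Fin m → ℕ) :
    permute ρ (permute σ a) = permute (ρ * σ) a := rfl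

@[to_additive]
theorem prod_comp_perm_fst {M : Type*} [CommMonoid M] (σ : Equiv.Perm (Fin n))
    (f : Fin n × Fin m → M) : ∏ p : Fin n × Fin m, f (σ p.1, p.2) = ∏ p, f p :=
  Fintype.prod_equiv (σ.prodCongr (Equiv.refl _)) _ _ fun _ => rfl

theorem prodCoeff_permute (σ : Equiv.Perm (Fin n)) (b c I : Fin n × Fin m → ℕ) :
    prodCoeff (permute σ b) (permute σ c) (permute σ I) = prodCoeff b c I := by
  rw [prodCoeff, prodCoeff,
    ← prod_comp_perm_fst σ⁻¹
      fun p : Fin n × Fin m => (b p).choose (I p) * (c p).descFactorial (I p),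
    ← sum_comp_perm_fst σ⁻¹ I]
  rfl

theorem sum_Iic_permute {M : Type*} [AddCommMonoid M] (ρ : Equiv.Perm (Fin n))
    (b : Fin n × Fin m → ℕ) (F : (Fin n × Fin m → ℕ) → M) :
    ∑ I ∈ Finset.Iic b, F (permute ρ I) = ∑ J ∈ Finset.Iic (permute ρ b), F J := by
  refine Finset.sum_nbij' (permute ρ) (permute ρ⁻¹) ?_ ?_ ?_ ?_ fun _ _ => rfl
  · exact fun I hI => Finset.mem_Iic.mpr fun p => Finset.mem_Iic.mp hI _
  · intro J hJ
    refine Finset.mem_Iic.mpr fun p => ?_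
    simpa [permute] using Finset.mem_Iic.mp hJ (ρ p.1, p.2)
  · intro I _
    rw [permute_permute, inv_mul_cancel]
    rfl
  · intro J _
    rw [permute_permute, mul_inv_cancel]
    rfl

def EvenBlocks (a b : Fin n × Fin m → ℕ) : Prop :=
  ∀ i, Even (∑ j, (a (i, j) + b (i, j)))

theorem EvenBlocks.permute {a b : Fin n × Fin m → ℕ} (h : EvenBlocks a b)
    (σ : Equiv.Perm (Fin n)) : EvenBlocks (permute σ a) (permute σ b) :=
  fun i => h (σ⁻¹ i)

theorem EvenBlocks.add_tsub {a b c d I : Fin n × Fin m → ℕ} (hab : EvenBlocks a b)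
    (hcd : EvenBlocks c d) (hb : I ≤ b) (hc : I ≤ c) : EvenBlocks (a + c - I) (b + d - I) := by
  intro i
  have hsum : (∑ j, ((a + c - I) (i, j) + (b + d - I) (i, j))) + 2 * ∑ j, I (i, j) =
      (∑ j, (a (i, j) + b (i, j))) + ∑ j, (c (i, j) + d (i, j)) := by
    simp only [Finset.mul_sum, ← Finset.sum_add_distrib]
    refine Finset.sum_congr rfl fun j _ => ?_
    have hbj : I (i, j) ≤ b (i, j) := hb (i, j)
    have hcj : I (i, j) ≤ c (i, j) := hc (i, j)
    simp only [Pi.add_apply, Pi.sub_apply]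
    omega
  have heven := (hab i).add (hcd i)
  rw [← hsum] at heven
  exact (Nat.even_add.mp heven).mpr (even_two_mul _)

theorem actW14_xy14 {a b : Fin n × Fin m → ℕ} (h : EvenBlocks a b) (t : Fin n → Bool)
    (σ : Equiv.Perm (Fin n)) :
    actW14 n m t σ (xy14 n m a b) = xy14 n m (permute σ a) (permute σ b) := by
  set sgn : Fin n → Alg14 n m := fun i => C (Polynomial.C (if t i then (-1 : ℚ) else 1))
  have hfactor : ∀ p : Fin n × Fin m,
      actW14 n m t σ (X ((p, false) : Var14 n m) ^ a p * X ((p, true) : Var14 n m) ^ b p) =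
        sgn p.1 ^ (a p + b p) * (X (((σ p.1, p.2), false) : Var14 n m) ^ a p *
          X (((σ p.1, p.2), true) : Var14 n m) ^ b p) := by
    intro p
    rw [actW14, map_mul, map_pow, map_pow, aeval_X, aeval_X]
    ring
  have hsign : ∏ p : Fin n × Fin m, sgn p.1 ^ (a p + b p) = 1 := by
    rw [Fintype.prod_prod_type]
    refine Finset.prod_eq_one fun i _ => ?_
    change ∏ j, sgn i ^ (a (i, j) + b (i, j)) = 1
    rw [Finset.prod_pow_eq_pow_sum]
    by_cases hti : t i
    · simp only [sgn, hti, if_true, map_neg, map_one]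
      exact Even.neg_one_pow (α := Alg14 n m) (h i)
    · simp only [sgn, hti, Bool.false_eq_true, if_false, map_one, one_pow]
  have hprod : actW14 n m t σ (xy14 n m a b) =
      ∏ p, actW14 n m t σ (X ((p, false) : Var14 n m) ^ a p * X ((p, true) : Var14 n m) ^ b p) :=
    map_prod (aeval _) _ _
  rw [hprod, Finset.prod_congr rfl fun p _ => hfactor p, Finset.prod_mul_distrib, hsign,
    one_mul, xy14, ← prod_comp_perm_fst σ⁻¹]
  simp only [permute, Equiv.Perm.coe_inv, Equiv.apply_symm_apply]

theorem symW14_xy14 {a b : Fin n × Fin m → ℕ} (h : EvenBlocks a b) :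
    symW14 n m (xy14 n m a b) =
      Polynomial.C ((n.factorial : ℚ))⁻¹ • ∑ σ, xy14 n m (permute σ a) (permute σ b) := by
  simp only [symW14, actW14_xy14 h, Finset.sum_const, Finset.card_univ, Fintype.card_fun,
    Fintype.card_bool, ← Nat.cast_smul_eq_nsmul (Polynomial ℚ), smul_smul]
  congr 1
  rw [← Polynomial.C_eq_natCast, ← map_mul]
  congr 1
  field_simp
  norm_num

theorem sum_prodCoeff_smul_symW14 {a b c d : Fin n × Fin m → ℕ} (hab : EvenBlocks a b)
    (hcd : EvenBlocks c d) :
    ∑ I ∈ (Finset.Iic b).filter (fun I => ∀ p, I p ≤ c p),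
        prodCoeff b c I • symW14 n m (xy14 n m (a + c - I) (b + d - I)) =
      Polynomial.C ((n.factorial : ℚ))⁻¹ • ∑ ρ, ∑ J ∈ Finset.Iic (permute ρ b),
        prodTerm (permute ρ a) (permute ρ b) (permute ρ c) (permute ρ d) J := by
  have hterm : ∀ I ∈ (Finset.Iic b).filter (fun I => ∀ p, I p ≤ c p),
      prodCoeff b c I • symW14 n m (xy14 n m (a + c - I) (b + d - I)) =
        Polynomial.C ((n.factorial : ℚ))⁻¹ •
          ∑ ρ, prodTerm (permute ρ a) (permute ρ b) (permute ρ c) (permute ρ d) (permute ρ I) := by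
    intro I hI
    obtain ⟨hIb, hIc⟩ := Finset.mem_filter.mp hI
    rw [symW14_xy14 (hab.add_tsub hcd (Finset.mem_Iic.mp hIb) hIc), smul_comm, Finset.smul_sum]
    exact congrArg _ (Finset.sum_congr rfl fun ρ _ => by rw [prodTerm, prodCoeff_permute]; rfl)
  have hvanish : ∀ I ∈ Finset.Iic b, Polynomial.C ((n.factorial : ℚ))⁻¹ •
      ∑ ρ, prodTerm (permute ρ a) (permute ρ b) (permute ρ c) (permute ρ d) (permute ρ I) ≠ 0 →
        ∀ p, I p ≤ c p := by
    intro I _ hne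
    by_contra hIc
    exact hne (by simp only [prodTerm, prodCoeff_permute,
      prodCoeff_eq_zero_of_not_le_right (c := c) hIc, zero_smul, Finset.sum_const_zero, smul_zero])
  rw [Finset.sum_congr rfl hterm, Finset.sum_filter_of_ne hvanish, ← Finset.smul_sum,
    Finset.sum_comm]
  exact congrArg _ (Finset.sum_congr rfl fun ρ _ => sum_Iic_permute ρ b _)

end QSym14

open QSym14

theorem statement14_general (n m : ℕ)
    (a b c d : Fin n × Fin m → ℕ)
    (hab : ∀ i : Fin n, Even (∑ j : Fin m, (a (i, j) + b (i, j))))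
    (hcd : ∀ i : Fin n, Even (∑ j : Fin m, (c (i, j) + d (i, j)))) :
    star14 n m (symW14 n m (xy14 n m a b)) (symW14 n m (xy14 n m c d)) =
      Polynomial.C ((n.factorial : ℚ))⁻¹ •
        ∑ σ : Equiv.Perm (Fin n),
          ∑ I ∈ Finset.univ.filter
              (fun I : (p : Fin n × Fin m) → Fin (b p + 1) =>
                ∀ p : Fin n × Fin m, (I p : ℕ) ≤ c (σ⁻¹ p.1, p.2)),
            (((∏ p : Fin n × Fin m,
                  (b p).choose (I p) * (c (σ⁻¹ p.1, p.2)).descFactorial (I p) : ℕ) :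
                Polynomial ℚ) *
              Polynomial.X ^ (∑ p : Fin n × Fin m, (I p : ℕ))) •
              symW14 n m (xy14 n m
                (fun p => a p + c (σ⁻¹ p.1, p.2) - (I p : ℕ))
                (fun p => b p + d (σ⁻¹ p.1, p.2) - (I p : ℕ))) := by
  rw [symW14_xy14 hab, symW14_xy14 hcd, star14_smul_sum_smul_sum]
  simp only [star14_xy14_xy14]
  symm
  calc _ = Polynomial.C ((n.factorial : ℚ))⁻¹ • ∑ σ, Polynomial.C ((n.factorial : ℚ))⁻¹ •
        ∑ ρ, ∑ J ∈ Finset.Iic (permute ρ b),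
          prodTerm (permute ρ a) (permute ρ b) (permute (ρ * σ) c) (permute (ρ * σ) d) J :=
        congrArg _ (Finset.sum_congr rfl fun σ _ =>
          (Finset.sum_filter_pi_fin_succ_eq_sum_filter_Iic b (fun J => ∀ p, J p ≤ permute σ c p)
            fun J => prodCoeff b (permute σ c) J •
              symW14 n m (xy14 n m (a + permute σ c - J) (b + permute σ d - J))).trans
            (sum_prodCoeff_smul_symW14 hab (EvenBlocks.permute hcd σ)))
    _ = _ := by
        rw [← Finset.smul_sum, smul_smul, Finset.sum_comm]
        exact congrArg _ (Finset.sum_congr rfl fun ρ _ => Equiv.sum_comp (Equiv.mulLeft ρ)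
          fun τ => ∑ J ∈ Finset.Iic (permute ρ b),
            prodTerm (permute ρ a) (permute ρ b) (permute τ c) (permute τ d) J)

/-- Product rule for the algebra `QSym_{B_n}(m)` of quantum symmetric functions of type
`B_n`: on monomials whose blocks have even total degree, the `B_n` product rule coincides
with the `A_n` one:
`s_W(x^a y^b) ⋆ s_W(x^c y^d) = (1/n!) Σ_{σ,I} (∏ C(b,I)(σ(c))_I) ℏ^{|I|} s_W(x^{a+σ(c)-I} y^{b+σ(d)-I})`. -/
theorem statement14 (n m : ℕ) (hn : 1 ≤ n) (hm : 1 ≤ m)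
    (a b c d : Fin n × Fin m → ℕ)
    (hab : ∀ i : Fin n, Even (∑ j : Fin m, (a (i, j) + b (i, j))))
    (hcd : ∀ i : Fin n, Even (∑ j : Fin m, (c (i, j) + d (i, j)))) :
    star14 n m (symW14 n m (xy14 n m a b)) (symW14 n m (xy14 n m c d)) =
      Polynomial.C ((n.factorial : ℚ))⁻¹ •
        ∑ σ : Equiv.Perm (Fin n),
          ∑ I ∈ Finset.univ.filter
              (fun I : (p : Fin n × Fin m) → Fin (b p + 1) =>
                ∀ p : Fin n × Fin m, (I p : ℕ) ≤ c (σ⁻¹ p.1, p.2)),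
            (((∏ p : Fin n × Fin m,
                  (b p).choose (I p) * (c (σ⁻¹ p.1, p.2)).descFactorial (I p) : ℕ) :
                Polynomial ℚ) *
              Polynomial.X ^ (∑ p : Fin n × Fin m, (I p : ℕ))) •
              symW14 n m (xy14 n m
                (fun p => a p + c (σ⁻¹ p.1, p.2) - (I p : ℕ))
                (fun p => b p + d (σ⁻¹ p.1, p.2) - (I p : ℕ))) :=
  statement14_general n m a b c d hab hcd
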